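/- Let Ω ⊆ ℂ be an open set, let K, L be compact subsets of the closure Ω̄, let s ≥ 1 be an integer and (p,q) ∈ ℕ×ℕ. Suppose g ∈ A^∞(Ω) satisfies: g ∈ D_{p,q}(ζ) for every ζ ∈ L, each Padé approximant [p/q]_{g,ζ} (ζ ∈ L) has no poles in K, and sup_{ζ∈L} sup_{z∈K} |([p/q]_{g,ζ})^{(l)}(z) − g^{(l)}(z)| < 1/s for every l = 0, 1, …, s. Then there exist a compact set T ⊆ Ω̄ with K ∪ L ⊆ T, a real number δ > 0 and m ∈ ℕ such that every g̃ ∈ A^∞(Ω) with sup_{z∈T} |g̃^{(l)}(z) − g^{(l)}(z)| < δ for all l = 0, 1, …, m satisfies the same three conditions: g̃ ∈ D_{p,q}(ζ) for every ζ ∈ L, each [p/q]_{g̃,ζ} has no poles in K, and sup_{ζ∈L} sup_{z∈K} |([p/q]_{g̃,ζ})^{(l)}(z) − g̃^{(l)}(z)| < 1/s for every l = 0, 1, …, s. -/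

import Mathlib

open Filter

noncomputable def taylorCoeff (f : ℂ → ℂ) (ζ : ℂ) (v : ℕ) : ℂ :=
  iteratedDeriv v f ζ / (Nat.factorial v : ℂ)

noncomputable def coeffZ (a : ℕ → ℂ) (k : ℤ) : ℂ :=
  if 0 ≤ k then a k.toNat else 0

/-- The q×q Hankel matrix with (i,j) entry `a (p-q+1+i+j)` (value 0 for negative index). -/
noncomputable def hankel (a : ℕ → ℂ) (p q : ℕ) : Matrix (Fin q) (Fin q) ℂ :=
  Matrix.of fun i j => coeffZ a ((p : ℤ) - (q : ℤ) + 1 + (i.1 : ℤ) + (j.1 : ℤ))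

/-- `f ∈ D_{p,q}(ζ)` for the coefficient sequence `a` of `f` at `ζ`:
either `q = 0` or the Hankel determinant is nonzero. -/
def MemD (a : ℕ → ℂ) (p q : ℕ) : Prop :=
  q = 0 ∨ (hankel a p q).det ≠ 0

/-- `Nu/De` (in the variable `w = z - ζ`) is a Padé approximant `[p/q]` of the series with
coefficients `a` : `deg Nu ≤ p`, `deg De ≤ q`, `De(0) = 1`, and the power series
`De(w)·Σ a_v w^v − Nu(w)` has vanishing coefficients in degrees `0,…,p+q`. -/
def IsPadeAt (a : ℕ → ℂ) (p q : ℕ) (Nu De : Polynomial ℂ) : Prop :=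
  Nu.natDegree ≤ p ∧ De.natDegree ≤ q ∧ De.coeff 0 = 1 ∧
    ∀ k ≤ p + q, (∑ i ∈ Finset.range (k + 1), De.coeff i * a (k - i)) = Nu.coeff k

/-- The coefficient sequence `a_v = fd v ζ / v!` built from the (extended) derivatives `fd`. -/
noncomputable def coeffOf (fd : ℕ → ℂ → ℂ) (ζ : ℂ) (v : ℕ) : ℂ :=
  fd v ζ / (Nat.factorial v : ℂ)

/-- `f ∈ A^∞(Ω)` with `fd l` the continuous extension of `f^{(l)}` to the closure of `Ω`. -/
def AInf (Ω : Set ℂ) (f : ℂ → ℂ) (fd : ℕ → ℂ → ℂ) : Prop :=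
  DifferentiableOn ℂ f Ω ∧ (∀ l, ContinuousOn (fd l) (closure Ω)) ∧
    ∀ l, ∀ z ∈ Ω, fd l z = iteratedDeriv l f z

/-- A Padé approximant `[p/q]` of the series `a` centered at `ζ` has no poles in `K` and all its
derivatives of order `l ≤ m` are uniformly `ε`-close on `K` to the corresponding `fd l`. -/
def PadeApproxDerivOn (a : ℕ → ℂ) (ζ : ℂ) (p q : ℕ) (fd : ℕ → ℂ → ℂ)
    (K : Set ℂ) (m : ℕ) (ε : ℝ) : Prop :=
  ∃ Nu De : Polynomial ℂ, IsPadeAt a p q Nu De ∧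
    (∀ z ∈ K, Polynomial.eval (z - ζ) De ≠ 0) ∧
    ∀ l ≤ m, ∀ z ∈ K,
      ‖iteratedDeriv l
        (fun w => Polynomial.eval (w - ζ) Nu / Polynomial.eval (w - ζ) De) z - fd l z‖ < ε

/-!
Take `T = K ∪ L` and argue by contradiction: otherwise there are `g_n` that are `1/(n+1)`-close
to `g` in the first `n` derivatives on `T`, and centres `ζ_n ∈ L` where they fail; pass to a
subsequence with `ζ_n → ζ₀ ∈ L`. The Taylor coefficients of `g_n` at `ζ_n` then converge to those
of `g` at `ζ₀`. Since the Hankel determinant at `ζ₀` is nonzero, the Padé approximant there is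
unique and is obtained by solving the Hankel system, so Padé approximants depend continuously on
the series near it. Hence the approximants of `g_n` converge, uniformly on a compact neighbourhood
of `K` free of poles, and by Weierstrass' theorem so do all their derivatives uniformly on `K`.
The strict inequalities, holding for the continuous limit on the compact set `K`, persist for
large `n`.
-/

open Topology Polynomial Finset Matrix

section PadeAlgebra

variable (a : ℕ → ℂ) (p q : ℕ)

lemma memD_iff_det_ne_zero : MemD a p q ↔ (hankel a p q).det ≠ 0 := by
  refine ⟨?_, Or.inr⟩
  rintro (rfl | h)
  · simp [Matrix.det_fin_zero]
  · exact h

lemma coeffZ_natCast (n : ℕ) : coeffZ a n = a n := by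
  simp [coeffZ]

lemma coeffZ_of_neg {k : ℤ} (hk : k < 0) : coeffZ a k = 0 := by
  simp [coeffZ, not_le.mpr hk]

def padeRhs : Fin q → ℂ := fun r => -a (p + 1 + r)

/-- In the coefficient of degree `p + 1 + r` of `D(w) · Σ a_v w^v`, the terms with `i ≥ 1` form row
`r` of the Hankel system in the unknowns `D.coeff (q - j) = D.coeff (j.rev + 1)`. -/
lemma sum_coeff_mul_eq_add_hankel_mulVec {D : ℂ[X]} (hD : D.natDegree ≤ q) (r : Fin q) :
    ∑ i ∈ range (p + 1 + r + 1), D.coeff i * a (p + 1 + r - i) =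
      D.coeff 0 * a (p + 1 + r) + (hankel a p q *ᵥ fun j => D.coeff (j.rev + 1)) r := by
  rw [sum_range_succ', Nat.sub_zero, add_comm]
  congr 1
  set f : ℕ → ℂ := fun i => D.coeff (i + 1) * coeffZ a ((p + r : ℕ) - i : ℤ)
  have hlhs : ∑ i ∈ range (p + 1 + r), D.coeff (i + 1) * a (p + 1 + r - (i + 1)) =
      ∑ i ∈ range (p + 1 + r), f i := by
    refine sum_congr rfl fun i hi => ?_
    have hi : i ≤ p + r := by simp at hi; omega
    simp only [f]
    rw [show ((p + r : ℕ) - i : ℤ) = ((p + r - i : ℕ) : ℤ) by push_cast [hi]; ring, coeffZ_natCast]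
    congr 2
    omega
  have hrhs : (hankel a p q *ᵥ fun j => D.coeff (j.rev + 1)) r = ∑ i ∈ range q, f i := by
    rw [← Fin.sum_univ_eq_sum_range, Matrix.mulVec, dotProduct, ← Equiv.sum_comp Fin.revPerm]
    refine Fintype.sum_congr _ _ fun j => ?_
    simp only [hankel, Matrix.of_apply, Fin.revPerm_apply, Fin.rev_rev, f, mul_comm]
    congr 2
    have := j.2
    rw [Fin.val_rev]
    push_cast [show j.1 + 1 ≤ q by omega]
    ring
  rw [hlhs, hrhs]
  have hf_high : ∀ i, q ≤ i → f i = 0 := fun i hi => by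
    simp [f, coeff_eq_zero_of_natDegree_lt (show D.natDegree < i + 1 by omega)]
  have hf_low : ∀ i, p + 1 + r ≤ i → f i = 0 := fun i hi => by
    simp only [f, coeffZ_of_neg a (show ((p + r : ℕ) - i : ℤ) < 0 by omega), mul_zero]
  rw [← eventually_constant_sum hf_low (le_add_right le_rfl : p + 1 + r ≤ p + 1 + r + q),
    ← eventually_constant_sum hf_high (le_add_left le_rfl : q ≤ p + 1 + r + q)]

noncomputable def padeDenomVec : Fin (q + 1) → ℂ :=
  Fin.cons 1 (((hankel a p q)⁻¹ *ᵥ padeRhs a p q) ∘ Fin.rev)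

noncomputable def padeDenom : ℂ[X] := ofFn (q + 1) (padeDenomVec a p q)

noncomputable def padeNumerVec : Fin (p + 1) → ℂ :=
  fun k => ∑ i ∈ range (k + 1), (padeDenom a p q).coeff i * a (k - i)

noncomputable def padeNumer : ℂ[X] := ofFn (p + 1) (padeNumerVec a p q)

lemma padeDenom_natDegree_le : (padeDenom a p q).natDegree ≤ q :=
  Nat.lt_succ_iff.mp (ofFn_natDegree_lt le_add_self _)

lemma padeNumer_natDegree_le : (padeNumer a p q).natDegree ≤ p :=
  Nat.lt_succ_iff.mp (ofFn_natDegree_lt le_add_self _)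

lemma padeDenom_coeff_zero : (padeDenom a p q).coeff 0 = 1 := by
  simp [padeDenom, padeDenomVec]

lemma padeDenom_coeff_succ (j : Fin q) :
    (padeDenom a p q).coeff (j + 1) = ((hankel a p q)⁻¹ *ᵥ padeRhs a p q) j.rev := by
  rw [padeDenom, ofFn_coeff_eq_val_of_lt _ (by omega)]
  exact Fin.cons_succ (α := fun _ => ℂ) _ _ j

variable {a p q}

lemma IsPadeAt.hankel_mulVec {N D : ℂ[X]} (h : IsPadeAt a p q N D) :
    hankel a p q *ᵥ (fun j => D.coeff (j.rev + 1)) = padeRhs a p q := by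
  obtain ⟨hN, hD, hD0, hcoeff⟩ := h
  funext r
  have hr := hcoeff (p + 1 + r) (by omega)
  rw [sum_coeff_mul_eq_add_hankel_mulVec a p q hD, hD0,
    coeff_eq_zero_of_natDegree_lt (by omega)] at hr
  simp only [padeRhs]
  linear_combination hr

lemma isPadeAt_padeNumer_padeDenom (hdet : (hankel a p q).det ≠ 0) :
    IsPadeAt a p q (padeNumer a p q) (padeDenom a p q) := by
  refine ⟨padeNumer_natDegree_le a p q, padeDenom_natDegree_le a p q, padeDenom_coeff_zero a p q,
    fun k hk => ?_⟩
  rcases le_or_gt k p with hkp | hkp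
  · rw [padeNumer, ofFn_coeff_eq_val_of_lt _ (by omega)]
    rfl
  obtain ⟨r, rfl⟩ : ∃ r : Fin q, k = p + 1 + r := ⟨⟨k - p - 1, by omega⟩, by simp; omega⟩
  have hsol : (fun j : Fin q => (padeDenom a p q).coeff (j.rev + 1)) =
      (hankel a p q)⁻¹ *ᵥ padeRhs a p q := by
    funext j
    rw [padeDenom_coeff_succ, Fin.rev_rev]
  rw [sum_coeff_mul_eq_add_hankel_mulVec a p q (padeDenom_natDegree_le a p q),
    hsol, mulVec_mulVec, mul_nonsing_inv _ (isUnit_iff_ne_zero.mpr hdet), one_mulVec,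
    padeDenom_coeff_zero, padeNumer, ofFn_coeff_eq_zero_of_ge _ (by omega)]
  simp [padeRhs]

lemma IsPadeAt.eq_padeDenom {N D : ℂ[X]} (h : IsPadeAt a p q N D)
    (hdet : (hankel a p q).det ≠ 0) : D = padeDenom a p q := by
  have hsol : (fun j => D.coeff (j.rev + 1)) = (hankel a p q)⁻¹ *ᵥ padeRhs a p q := by
    rw [← h.hankel_mulVec, mulVec_mulVec, nonsing_inv_mul _ (isUnit_iff_ne_zero.mpr hdet),
      one_mulVec]
  ext i
  rcases i with _ | i
  · rw [padeDenom_coeff_zero, h.2.2.1]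
  rcases lt_or_ge i q with hiq | hiq
  · have := congrFun hsol (Fin.rev ⟨i, hiq⟩)
    rw [Fin.rev_rev] at this
    rw [padeDenom_coeff_succ a p q ⟨i, hiq⟩, ← this]
  · rw [coeff_eq_zero_of_natDegree_lt (by have := h.2.1; omega), padeDenom,
      ofFn_coeff_eq_zero_of_ge _ (by omega)]

lemma IsPadeAt.eq_padeNumer {N D : ℂ[X]} (h : IsPadeAt a p q N D)
    (hdet : (hankel a p q).det ≠ 0) : N = padeNumer a p q := by
  ext k
  rcases le_or_gt k p with hkp | hkp
  · rw [padeNumer, ofFn_coeff_eq_val_of_lt _ (by omega), ← h.2.2.2 k (by omega),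
      h.eq_padeDenom hdet]
    rfl
  · rw [coeff_eq_zero_of_natDegree_lt (by have := h.1; omega), padeNumer,
      ofFn_coeff_eq_zero_of_ge _ (by omega)]

end PadeAlgebra

section UniformLimits

lemma TendstoUniformlyOn.comp_tendsto {ι κ α β : Type*} [UniformSpace β] {F : ι → α → β}
    {f : α → β} {p : Filter ι} {s : Set α} (h : TendstoUniformlyOn F f p s) {g : κ → ι}
    {q : Filter κ} (hg : Tendsto g q p) : TendstoUniformlyOn (fun k => F (g k)) f q s :=
  fun u hu => hg.eventually (h u hu)

lemma tendstoUniformlyOn_of_eventually_norm_sub_lt {ι α E : Type*} [SeminormedAddCommGroup E]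
    {F : ι → α → E} {f : α → E} {l : Filter ι} {s : Set α} {δ : ι → ℝ}
    (hδ : Tendsto δ l (𝓝 0)) (h : ∀ᶠ i in l, ∀ z ∈ s, ‖F i z - f z‖ < δ i) :
    TendstoUniformlyOn F f l s := by
  refine Metric.tendstoUniformlyOn_iff.mpr fun ε hε => ?_
  filter_upwards [h, hδ (Iio_mem_nhds hε)] with i hi hδi z hz
  rw [dist_comm, dist_eq_norm]
  exact (hi z hz).trans hδi

lemma TendstoUniformlyOn.eventually_norm_lt {ι α E : Type*} [TopologicalSpace α]
    [SeminormedAddCommGroup E] {F : ι → α → E} {f : α → E} {l : Filter ι} {K : Set α} {c : ℝ}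
    (h : TendstoUniformlyOn F f l K) (hK : IsCompact K) (hf : ContinuousOn f K)
    (hfc : ∀ z ∈ K, ‖f z‖ < c) : ∀ᶠ i in l, ∀ z ∈ K, ‖F i z‖ < c := by
  rcases K.eq_empty_or_nonempty with rfl | hne
  · simp
  obtain ⟨z₀, hz₀, hmax⟩ := hK.exists_isMaxOn hne (continuous_norm.comp_continuousOn hf)
  filter_upwards [Metric.tendstoUniformlyOn_iff.mp h _ (sub_pos.mpr (hfc z₀ hz₀))] with i hi z hz
  have hdist := hi z hz
  rw [dist_eq_norm] at hdist
  calc ‖F i z‖ ≤ ‖f z‖ + ‖f z - F i z‖ := norm_le_norm_add_norm_sub _ _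
    _ < c := by linarith [show ‖f z‖ ≤ ‖f z₀‖ from hmax hz]

lemma IsCompact.tendstoUniformlyOn_of_continuousOn_prod {X Y E : Type*} [TopologicalSpace X]
    [TopologicalSpace Y] [UniformSpace E] {f : X → Y → E} {x₀ : X} {s : Set X} {C : Set Y}
    (hC : IsCompact C) (hs : s ∈ 𝓝 x₀) (hf : ContinuousOn ↿f (s ×ˢ C)) :
    TendstoUniformlyOn f (f x₀) (𝓝 x₀) C := by
  intro u hu
  obtain ⟨v, hv, hvu⟩ := hC.mem_uniformity_of_prod hf (mem_of_mem_nhds hs) (symm_le_uniformity hu)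
  rw [nhdsWithin_eq_nhds.mpr hs] at hv
  filter_upwards [hv] with x hx z hz using hvu x hx z hz

end UniformLimits

section Weierstrass

variable {E : Type*} [NormedAddCommGroup E] [NormedSpace ℂ E] [CompleteSpace E]

lemma DifferentiableOn.iteratedDeriv {f : ℂ → E} {U : Set ℂ} (hf : DifferentiableOn ℂ f U)
    (hU : IsOpen U) (l : ℕ) : DifferentiableOn ℂ (iteratedDeriv l f) U := by
  induction l with
  | zero => simpa
  | succ l ih => simpa only [iteratedDeriv_succ] using ih.deriv hU

lemma TendstoLocallyUniformlyOn.iteratedDeriv {ι : Type*} {F : ι → ℂ → E} {f : ℂ → E}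
    {φ : Filter ι} {U : Set ℂ} (hf : TendstoLocallyUniformlyOn F f φ U)
    (hF : ∀ᶠ n in φ, DifferentiableOn ℂ (F n) U) (hU : IsOpen U) (l : ℕ) :
    TendstoLocallyUniformlyOn (fun n => iteratedDeriv l (F n)) (iteratedDeriv l f) φ U := by
  induction l with
  | zero => simpa
  | succ l ih =>
    simp only [iteratedDeriv_succ]
    exact ih.deriv (hF.mono fun n hn => hn.iteratedDeriv hU l) hU

lemma tendstoUniformlyOn_iteratedDeriv_of_continuousOn_prod {X : Type*} [TopologicalSpace X]
    {f : X → ℂ → E} {x₀ : X} {s : Set X} {U K : Set ℂ} (hs : s ∈ 𝓝 x₀) (hU : IsOpen U)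
    (hUc : IsCompact (closure U)) (hf : ContinuousOn ↿f (s ×ˢ closure U))
    (hfd : ∀ x ∈ s, DifferentiableOn ℂ (f x) U) (hK : IsCompact K) (hKU : K ⊆ U) (l : ℕ) :
    TendstoUniformlyOn (fun x => iteratedDeriv l (f x)) (iteratedDeriv l (f x₀)) (𝓝 x₀) K := by
  have hloc : TendstoLocallyUniformlyOn f (f x₀) (𝓝 x₀) U :=
    ((hUc.tendstoUniformlyOn_of_continuousOn_prod hs hf).mono subset_closure
      ).tendstoLocallyUniformlyOn
  exact (tendstoLocallyUniformlyOn_iff_forall_isCompact hU).mp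
    (hloc.iteratedDeriv (Filter.eventually_of_mem hs hfd) hU l) K hKU hK

end Weierstrass

section PadeContinuity

lemma Polynomial.eval_ofFn {R : Type*} [Semiring R] [DecidableEq R] {n : ℕ} (v : Fin n → R)
    (x : R) : (ofFn n v).eval x = ∑ i, v i * x ^ (i : ℕ) := by
  simp [ofFn_eq_sum_monomial, eval_finsetSum]

lemma ContinuousAt.eval_ofFn {X R : Type*} [TopologicalSpace X] [Semiring R] [DecidableEq R]
    [TopologicalSpace R] [IsTopologicalSemiring R] {n : ℕ} {v : X → Fin n → R} {w : X → R} {x : X} (hv : ContinuousAt v x) (hw : ContinuousAt w x) :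
    ContinuousAt (fun y => (ofFn n (v y)).eval (w y)) x := by
  simp only [Polynomial.eval_ofFn]
  have hvi := fun i => (continuous_apply i).continuousAt.comp hv
  fun_prop

lemma continuous_coeffZ (k : ℤ) : Continuous fun a : ℕ → ℂ => coeffZ a k := by
  unfold coeffZ
  split_ifs
  exacts [continuous_apply _, continuous_const]

lemma continuous_hankel (p q : ℕ) : Continuous fun a : ℕ → ℂ => hankel a p q :=
  continuous_pi fun _ => continuous_pi fun _ => continuous_coeffZ _

variable {a : ℕ → ℂ} {p q : ℕ}

lemma continuousAt_padeDenomVec (hdet : (hankel a p q).det ≠ 0) :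
    ContinuousAt (fun b => padeDenomVec b p q) a := by
  have hinv : ContinuousAt (fun b => (hankel b p q)⁻¹) a :=
    ContinuousAt.comp (g := Inv.inv)
      (continuousAt_matrix_inv _ (by rw [Ring.inverse_eq_inv']; exact continuousAt_inv₀ hdet))
      (continuous_hankel p q).continuousAt
  have hrhs : Continuous fun b => padeRhs b p q :=
    continuous_pi fun _ => (continuous_apply _).neg
  have hsol : ContinuousAt (fun b => (hankel b p q)⁻¹ *ᵥ padeRhs b p q) a :=
    (continuous_fst.matrix_mulVec continuous_snd).continuousAt.comp
      (f := fun b => ((hankel b p q)⁻¹, padeRhs b p q)) (hinv.prodMk hrhs.continuousAt)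
  exact continuousAt_const.finCons
    (continuousAt_pi.mpr fun j => (continuous_apply j.rev).continuousAt.comp hsol)

lemma continuousAt_padeDenom_coeff (hdet : (hankel a p q).det ≠ 0) (i : ℕ) :
    ContinuousAt (fun b => (padeDenom b p q).coeff i) a := by
  rcases lt_or_ge i (q + 1) with hi | hi
  · simp only [padeDenom, ofFn_coeff_eq_val_of_lt _ hi]
    exact (continuous_apply _).continuousAt.comp (continuousAt_padeDenomVec hdet)
  · simp only [padeDenom, ofFn_coeff_eq_zero_of_ge _ hi]
    exact continuousAt_const

lemma continuousAt_padeNumerVec (hdet : (hankel a p q).det ≠ 0) :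
    ContinuousAt (fun b => padeNumerVec b p q) a := by
  refine continuousAt_pi.mpr fun k => ?_
  have hD := continuousAt_padeDenom_coeff hdet
  have ha : ∀ v, ContinuousAt (fun b : ℕ → ℂ => b v) a := fun v => (continuous_apply v).continuousAt
  exact tendsto_finsetSum _ fun i _ => (hD i).mul (ha _)

end PadeContinuity

section PadeFamily

noncomputable def ratFunAt (N D : ℂ[X]) (ζ : ℂ) : ℂ → ℂ :=
  fun w => N.eval (w - ζ) / D.eval (w - ζ)

lemma differentiableOn_ratFunAt (N D : ℂ[X]) (ζ : ℂ) :
    DifferentiableOn ℂ (ratFunAt N D ζ) {z | D.eval (z - ζ) ≠ 0} := fun z hz =>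
  ((N.differentiable.comp (differentiable_id.sub_const ζ) z).div
    (D.differentiable.comp (differentiable_id.sub_const ζ) z) hz).differentiableWithinAt

variable (p q : ℕ)

/-- The parameter space `(ℕ → ℂ) × ℂ` (series, centre) carries the product topology, so
convergence in it is coefficientwise convergence of the series together with that of the centre. -/
noncomputable def padeFamily (x : (ℕ → ℂ) × ℂ) : ℂ → ℂ :=
  ratFunAt (padeNumer x.1 p q) (padeDenom x.1 p q) x.2

def padeRegularSet (C : Set ℂ) : Set ((ℕ → ℂ) × ℂ) :=
  {x | (hankel x.1 p q).det ≠ 0 ∧ ∀ z ∈ C, (padeDenom x.1 p q).eval (z - x.2) ≠ 0}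

variable {p q}

lemma continuousAt_eval_ofFn_sub {n : ℕ} {V : (ℕ → ℂ) → Fin n → ℂ} {y : ((ℕ → ℂ) × ℂ) × ℂ}
    (hV : ContinuousAt V y.1.1) :
    ContinuousAt (fun y : ((ℕ → ℂ) × ℂ) × ℂ => (ofFn n (V y.1.1)).eval (y.2 - y.1.2)) y :=
  ContinuousAt.eval_ofFn (hV.comp (f := fun y : ((ℕ → ℂ) × ℂ) × ℂ => y.1.1) (by fun_prop))
    (by fun_prop)

lemma padeRegularSet_mem_nhds {C : Set ℂ} (hC : IsCompact C) {x : (ℕ → ℂ) × ℂ}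
    (hx : x ∈ padeRegularSet p q C) : padeRegularSet p q C ∈ 𝓝 x := by
  have hdet : ∀ᶠ y in 𝓝 x, (hankel y.1 p q).det ≠ 0 :=
    ((continuous_hankel p q).matrix_det.comp continuous_fst).continuousAt.eventually_ne hx.1
  have hden : ∀ᶠ y in 𝓝 x, ∀ z ∈ C, (padeDenom y.1 p q).eval (z - y.2) ≠ 0 :=
    hC.eventually_forall_of_forall_eventually fun z hz =>
      (continuousAt_eval_ofFn_sub (y := (x, z)) (continuousAt_padeDenomVec hx.1)).eventually_ne
        (hx.2 z hz)
  exact hdet.and hden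

lemma continuousOn_padeFamily (C : Set ℂ) :
    ContinuousOn ↿(padeFamily p q) (padeRegularSet p q C ×ˢ C) := by
  rintro ⟨x, z⟩ ⟨hx, hz⟩
  exact ((continuousAt_eval_ofFn_sub (continuousAt_padeNumerVec hx.1)).div
    (continuousAt_eval_ofFn_sub (continuousAt_padeDenomVec hx.1)) (hx.2 z hz)).continuousWithinAt

lemma differentiableOn_padeFamily {C : Set ℂ} {x : (ℕ → ℂ) × ℂ} (hx : x ∈ padeRegularSet p q C) :
    DifferentiableOn ℂ (padeFamily p q x) C :=
  (differentiableOn_ratFunAt _ _ _).mono hx.2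

end PadeFamily

theorem eventually_memD_and_padeApproxDerivOn {ι : Type*} {F : Filter ι} {a : ℕ → ℂ} {ζ : ℂ}
    {p q m : ℕ} {fd : ℕ → ℂ → ℂ} {K : Set ℂ} {ε : ℝ} (hK : IsCompact K)
    (hfd : ∀ l ≤ m, ContinuousOn (fd l) K) (ha : MemD a p q)
    (hpade : PadeApproxDerivOn a ζ p q fd K m ε) {x : ι → (ℕ → ℂ) × ℂ}
    {fdx : ι → ℕ → ℂ → ℂ} (hx : Tendsto x F (𝓝 (a, ζ)))
    (hfdx : ∀ l ≤ m, TendstoUniformlyOn (fun i => fdx i l) (fd l) F K) :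
    ∀ᶠ i in F, MemD (x i).1 p q ∧ PadeApproxDerivOn (x i).1 (x i).2 p q (fdx i) K m ε := by
  rw [memD_iff_det_ne_zero] at ha
  obtain ⟨N, D, hND, hpole, hclose⟩ := hpade
  obtain rfl := hND.eq_padeNumer ha
  obtain rfl := hND.eq_padeDenom ha
  obtain ⟨U, hU, hKU, hUpole, hUc⟩ := exists_open_between_and_isCompact_closure hK
    (isOpen_ne_fun (by fun_prop) continuous_const) hpole
  have hreg : (a, ζ) ∈ padeRegularSet p q (closure U) := ⟨ha, hUpole⟩
  have hs := padeRegularSet_mem_nhds hUc hreg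
  have hderiv : ∀ l, TendstoUniformlyOn (fun i => iteratedDeriv l (padeFamily p q (x i)))
      (iteratedDeriv l (padeFamily p q (a, ζ))) F K := fun l =>
    (tendstoUniformlyOn_iteratedDeriv_of_continuousOn_prod hs hU hUc
      (continuousOn_padeFamily _) (fun y hy => (differentiableOn_padeFamily hy).mono subset_closure)
      hK hKU l).comp_tendsto hx
  have hlim : ∀ l, ContinuousOn (iteratedDeriv l (padeFamily p q (a, ζ))) K := fun l =>
    (((differentiableOn_ratFunAt _ _ _).iteratedDeriv
      (isOpen_ne_fun (by fun_prop) continuous_const) l).continuousOn).mono hpole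
  have hnear : ∀ l ∈ Set.Iic m, ∀ᶠ i in F, ∀ z ∈ K,
      ‖iteratedDeriv l (padeFamily p q (x i)) z - fdx i l z‖ < ε := fun l hl =>
    ((hderiv l).sub (hfdx l hl)).eventually_norm_lt hK ((hlim l).sub (hfd l hl)) (hclose l hl)
  filter_upwards [hx.eventually hs, (Set.finite_Iic m).eventually_all.mpr hnear] with i hi hi'
  exact ⟨(memD_iff_det_ne_zero _ _ _).mpr hi.1, _, _, isPadeAt_padeNumer_padeDenom hi.1,
    fun z hz => hi.2 z (subset_closure (hKU hz)), hi'⟩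

theorem stmt9_general (Ω : Set ℂ) (K L : Set ℂ)
    (hK : K ⊆ closure Ω) (hKc : IsCompact K) (hL : L ⊆ closure Ω) (hLc : IsCompact L)
    (s : ℕ) (p q : ℕ)
    (g : ℂ → ℂ) (gd : ℕ → ℂ → ℂ) (hg : AInf Ω g gd)
    (hcond : ∀ ζ ∈ L, MemD (coeffOf gd ζ) p q ∧
      PadeApproxDerivOn (coeffOf gd ζ) ζ p q gd K s (1 / (s : ℝ))) :
    ∃ T : Set ℂ, T ⊆ closure Ω ∧ IsCompact T ∧ K ∪ L ⊆ T ∧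
      ∃ δ : ℝ, 0 < δ ∧ ∃ m : ℕ,
        ∀ g' : ℂ → ℂ, ∀ gd' : ℕ → ℂ → ℂ, AInf Ω g' gd' →
          (∀ l ≤ m, ∀ z ∈ T, ‖gd' l z - gd l z‖ < δ) →
          ∀ ζ ∈ L, MemD (coeffOf gd' ζ) p q ∧
            PadeApproxDerivOn (coeffOf gd' ζ) ζ p q gd' K s (1 / (s : ℝ)) := by
  refine ⟨K ∪ L, Set.union_subset hK hL, hKc.union hLc, subset_rfl, ?_⟩
  by_contra! hbad
  choose _ Gd _ hclose ζs hζsL hfail using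
    fun n : ℕ => hbad (1 / ((n : ℝ) + 1)) Nat.one_div_pos_of_nat n
  obtain ⟨ζ₀, hζ₀L, φ, hφ, hζφ⟩ := hLc.tendsto_subseq hζsL
  have hunif : ∀ l, TendstoUniformlyOn (fun n => Gd (φ n) l) (gd l) atTop (K ∪ L) := fun l =>
    (tendstoUniformlyOn_of_eventually_norm_sub_lt tendsto_one_div_add_atTop_nhds_zero_nat
      ((eventually_ge_atTop l).mono fun n hn => hclose n l hn)).comp_tendsto hφ.tendsto_atTop
  have hcoeff : Tendsto (fun n => coeffOf (Gd (φ n)) (ζs (φ n))) atTop (𝓝 (coeffOf gd ζ₀)) :=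
    tendsto_pi_nhds.mpr fun v => (((hunif v).mono Set.subset_union_right).tendsto_comp
      ((hg.2.1 v).mono hL ζ₀ hζ₀L)
      (tendsto_nhdsWithin_iff.mpr ⟨hζφ, Eventually.of_forall fun n => hζsL _⟩)).div_const _
  obtain ⟨hD, hP⟩ := hcond ζ₀ hζ₀L
  obtain ⟨n, hn⟩ := (eventually_memD_and_padeApproxDerivOn hKc (fun l _ => (hg.2.1 l).mono hK) hD hP
    (hcoeff.prodMk_nhds hζφ) (fun l _ => (hunif l).mono Set.subset_union_left)).exists
  exact hfail (φ n) hn.1 hn.2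

theorem stmt9 (Ω : Set ℂ) (hΩ : IsOpen Ω) (K L : Set ℂ)
    (hK : K ⊆ closure Ω) (hKc : IsCompact K) (hL : L ⊆ closure Ω) (hLc : IsCompact L)
    (s : ℕ) (hs : 1 ≤ s) (p q : ℕ)
    (g : ℂ → ℂ) (gd : ℕ → ℂ → ℂ) (hg : AInf Ω g gd)
    (hcond : ∀ ζ ∈ L, MemD (coeffOf gd ζ) p q ∧
      PadeApproxDerivOn (coeffOf gd ζ) ζ p q gd K s (1 / (s : ℝ))) :
    ∃ T : Set ℂ, T ⊆ closure Ω ∧ IsCompact T ∧ K ∪ L ⊆ T ∧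
      ∃ δ : ℝ, 0 < δ ∧ ∃ m : ℕ,
        ∀ g' : ℂ → ℂ, ∀ gd' : ℕ → ℂ → ℂ, AInf Ω g' gd' →
          (∀ l ≤ m, ∀ z ∈ T, ‖gd' l z - gd l z‖ < δ) →
          ∀ ζ ∈ L, MemD (coeffOf gd' ζ) p q ∧
            PadeApproxDerivOn (coeffOf gd' ζ) ζ p q gd' K s (1 / (s : ℝ)) :=
  stmt9_general Ω K L hK hKc hL hLc s p q g gd hg hcond
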